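/- Let p > 3 be a prime. The number of distinct sets among the Ω_k^p, as k ranges over ℤ/pℤ \ {0,-1} (equivalently, the number of parts of the partition of ℤ/pℤ \ {0,-1} by these sets), is (p+5)/6 if p ≡ 1 (mod 3), and (p+1)/6 if p ≡ -1 (mod 3). -/
import Mathlib

/-- `Ω_k^p := {k, -1-k, k⁻¹, -1-k⁻¹, -(k+1)⁻¹, (k+1)⁻¹ - 1} ⊆ ℤ/pℤ`. -/
def Omega (p : ℕ) (k : ZMod p) : Finset (ZMod p) :=
  {k, -1 - k, k⁻¹, -1 - k⁻¹, -(k + 1)⁻¹, (k + 1)⁻¹ - 1}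

/-- The index set `ℤ/pℤ \ {0, -1}` as a finset. -/
def indexSet (p : ℕ) [NeZero p] : Finset (ZMod p) :=
  Finset.univ.filter (fun k => k ≠ 0 ∧ k ≠ -1)

set_option linter.unusedSectionVars false
set_option linter.unusedVariables false
set_option linter.unnecessarySimpa false

variable {p : ℕ} [Fact p.Prime]

lemma two_ne (hp3 : 3 < p) : (2 : ZMod p) ≠ 0 := by
  have : ((2:ℕ) : ZMod p) ≠ 0 := by
    rw [Ne, ZMod.natCast_eq_zero_iff]
    intro h
    have := Nat.le_of_dvd (by norm_num) h
    omega
  simpa using this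

lemma three_ne (hp3 : 3 < p) : (3 : ZMod p) ≠ 0 := by
  have : ((3:ℕ) : ZMod p) ≠ 0 := by
    rw [Ne, ZMod.natCast_eq_zero_iff]
    intro h
    have := Nat.le_of_dvd (by norm_num) h
    omega
  simpa using this

lemma omega_neg (k : ZMod p) : Omega p (-1 - k) = Omega p k := by
  have h1 : (-1 - k : ZMod p)⁻¹ = -(k + 1)⁻¹ := by
    rw [show (-1 - k : ZMod p) = -(k + 1) by ring, inv_neg]
  have h2 : (-1 - k + 1 : ZMod p)⁻¹ = -k⁻¹ := by
    rw [show (-1 - k + 1 : ZMod p) = -k by ring, inv_neg]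
  simp only [Omega, h1, h2]
  have e1 : (-1 - (-1 - k) : ZMod p) = k := by ring
  have e2 : (-1 - -(k+1)⁻¹ : ZMod p) = (k+1)⁻¹ - 1 := by ring
  have e3 : (- -k⁻¹ : ZMod p) = k⁻¹ := by ring
  have e4 : (-k⁻¹ - 1 : ZMod p) = -1 - k⁻¹ := by ring
  rw [e1, e2, e3, e4]
  ext x
  simp only [Finset.mem_insert, Finset.mem_singleton]
  tauto

lemma omega_inv {k : ZMod p} (hk0 : k ≠ 0) (hk1 : k ≠ -1) : Omega p k⁻¹ = Omega p k := by
  have hk1' : k + 1 ≠ 0 := fun h => hk1 (by linear_combination h)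
  have h1 : (k⁻¹ + 1 : ZMod p)⁻¹ = 1 - (k + 1)⁻¹ := by
    have hki : (k⁻¹ + 1 : ZMod p) = (1 + k) * k⁻¹ := by
      field_simp
    rw [hki, mul_inv, inv_inv, show (k:ZMod p) + 1 = 1 + k from by ring]
    have h2 : (1 + k) * (1 + k)⁻¹ = 1 := mul_inv_cancel₀ (by rw [add_comm]; exact hk1')
    linear_combination h2
  simp only [Omega, inv_inv, h1]
  have e1 : (-(1 - (k+1)⁻¹) : ZMod p) = (k+1)⁻¹ - 1 := by ring
  have e2 : ((1 - (k+1)⁻¹) - 1 : ZMod p) = -(k+1)⁻¹ := by ring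
  rw [e1, e2]
  ext x
  simp only [Finset.mem_insert, Finset.mem_singleton]
  tauto

lemma mem_omega_self (k : ZMod p) : k ∈ Omega p k := by simp [Omega]

lemma omega_subset_index {k : ZMod p} (hk0 : k ≠ 0) (hk1 : k ≠ -1) :
    Omega p k ⊆ indexSet p := by
  have hk1' : k + 1 ≠ 0 := fun h => hk1 (by linear_combination h)
  have hi0 : k⁻¹ ≠ 0 := inv_ne_zero hk0
  have hi1 : k⁻¹ ≠ -1 := by
    intro h
    apply hk1
    have := congrArg (·⁻¹) h
    simpa [inv_neg] using this
  have hki1 : (k+1)⁻¹ ≠ 0 := inv_ne_zero hk1'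
  intro x hx
  simp only [Omega, Finset.mem_insert, Finset.mem_singleton] at hx
  simp only [indexSet, Finset.mem_filter, Finset.mem_univ, true_and]
  rcases hx with h|h|h|h|h|h <;> subst h
  · exact ⟨hk0, hk1⟩
  · exact ⟨fun h => hk1 (by linear_combination -h), fun h => hk0 (by linear_combination -h)⟩
  · exact ⟨hi0, hi1⟩
  · exact ⟨fun h => hi1 (by linear_combination -h), fun h => hi0 (by linear_combination -h)⟩
  · constructor
    · simpa using hki1
    · intro h
      have h2 : (k+1)⁻¹ = 1 := by linear_combination -h
      have := congrArg (·⁻¹) h2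
      simp at this
      exact hk0 (by linear_combination this)
  · constructor
    · intro h
      have h2 : (k+1)⁻¹ = 1 := by linear_combination h
      have := congrArg (·⁻¹) h2
      simp at this
      exact hk0 (by linear_combination this)
    · intro h
      exact hki1 (by linear_combination h)

lemma omega_eq_of_mem {k j : ZMod p} (hk0 : k ≠ 0) (hk1 : k ≠ -1)
    (hj : j ∈ Omega p k) : Omega p j = Omega p k := by
  have hk1' : k + 1 ≠ 0 := fun h => hk1 (by linear_combination h)
  have hn0 : (-1 - k : ZMod p) ≠ 0 := fun h => hk1 (by linear_combination -h)
  have hn1 : (-1 - k : ZMod p) ≠ -1 := fun h => hk0 (by linear_combination -h)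
  have hi0 : k⁻¹ ≠ 0 := inv_ne_zero hk0
  have hi1 : k⁻¹ ≠ -1 := by
    intro h
    apply hk1
    have := congrArg (·⁻¹) h
    simpa [inv_neg] using this
  simp only [Omega, Finset.mem_insert, Finset.mem_singleton] at hj
  rcases hj with h|h|h|h|h|h <;> subst h
  · rfl
  · exact omega_neg k
  · exact omega_inv hk0 hk1
  · rw [show (-1 - k⁻¹ : ZMod p) = -1 - k⁻¹ from rfl, omega_neg, omega_inv hk0 hk1]
  · rw [show (-(k+1)⁻¹ : ZMod p) = (-1 - k)⁻¹ from by rw [show (-1-k:ZMod p) = -(k+1) by ring, inv_neg],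
      omega_inv hn0 hn1, omega_neg]
  · rw [show ((k+1)⁻¹ - 1 : ZMod p) = -1 - (-1 - k)⁻¹ from by
        rw [show (-1-k:ZMod p) = -(k+1) by ring, inv_neg]; ring,
      omega_neg, omega_inv hn0 hn1, omega_neg]

lemma omega_one (hp3 : 3 < p) : Omega p 1 = {1, -2, -(2:ZMod p)⁻¹} := by
  have h2 : (2 : ZMod p) ≠ 0 := two_ne hp3
  have e1 : ((1:ZMod p) + 1) = 2 := by ring
  have e2 : (2:ZMod p)⁻¹ - 1 = -(2:ZMod p)⁻¹ := by
    have := mul_inv_cancel₀ h2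
    linear_combination this
  have e3 : (-1 - (1:ZMod p)) = -2 := by ring
  have e4 : ((1:ZMod p))⁻¹ = 1 := inv_one
  have e5 : (-1 - (1:ZMod p)⁻¹) = -2 := by rw [e4]; ring
  simp only [Omega, e1, e2, e3, e4, e5]
  ext x
  simp only [Finset.mem_insert, Finset.mem_singleton]
  tauto

lemma card_omega_one (hp3 : 3 < p) : (Omega p 1).card = 3 := by
  have h2 : (2 : ZMod p) ≠ 0 := two_ne hp3
  have h3 : (3 : ZMod p) ≠ 0 := three_ne hp3
  have hinv : (2:ZMod p) * (2:ZMod p)⁻¹ = 1 := mul_inv_cancel₀ h2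
  rw [omega_one hp3]
  rw [Finset.card_insert_of_notMem, Finset.card_insert_of_notMem, Finset.card_singleton]
  · simp only [Finset.mem_singleton]
    intro h
    exact h3 (by linear_combination -2*h + hinv)
  · simp only [Finset.mem_insert, Finset.mem_singleton]
    push_neg
    constructor
    · intro h; exact h3 (by linear_combination h)
    · intro h; exact h3 (by linear_combination 2*h - hinv)

lemma card_omega_root (hp3 : 3 < p) {w : ZMod p} (hw : w^2 + w + 1 = 0) :
    Omega p w = {w, w^2} ∧ (Omega p w).card = 2 := by
  have h3 : (3 : ZMod p) ≠ 0 := three_ne hp3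
  have hw0 : w ≠ 0 := by intro h; subst h; simpa using hw
  have hw1 : w ≠ 1 := by intro h; subst h; exact h3 (by linear_combination hw)
  have hcube : w * w^2 = 1 := by linear_combination (w - 1) * hw
  have hinv : w⁻¹ = w^2 := inv_eq_of_mul_eq_one_right hcube
  have hw1' : w + 1 ≠ 0 := by
    intro h
    have : w = -1 := by linear_combination h
    subst this
    exact three_ne hp3 (by linear_combination 3*hw)
  have hne : w ≠ w^2 := by
    intro h
    have : w * (w - 1) = 0 := by linear_combination -h
    rcases mul_eq_zero.1 this with h'|h'
    · exact hw0 h'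
    · exact hw1 (by linear_combination h')
  have e1 : (-1 - w : ZMod p) = w^2 := by linear_combination -hw
  have e2 : (-1 - w^2 : ZMod p) = w := by linear_combination -hw
  have einv : (w+1)⁻¹ = -w := inv_eq_of_mul_eq_one_right (by linear_combination -hw)
  have e3 : (-(w+1)⁻¹ : ZMod p) = w := by rw [einv]; ring
  have e4 : ((w+1)⁻¹ - 1 : ZMod p) = w^2 := by rw [einv]; linear_combination -hw
  have hset : Omega p w = {w, w^2} := by
    simp only [Omega, hinv, e1, e2, e3, e4]
    ext x
    simp only [Finset.mem_insert, Finset.mem_singleton]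
    tauto
  refine ⟨hset, ?_⟩
  rw [hset, Finset.card_insert_of_notMem (by simpa using hne), Finset.card_singleton]

lemma card_omega_six {k : ZMod p} (hk0 : k ≠ 0) (hk1 : k ≠ -1) (hkm1 : k ≠ 1)
    (hk2 : k ≠ -2) (h2k : 2*k+1 ≠ 0) (hq : k^2+k+1 ≠ 0) : (Omega p k).card = 6 := by
  have hk1' : k + 1 ≠ 0 := fun h => hk1 (by linear_combination h)
  have hk2' : k + 2 ≠ 0 := fun h => hk2 (by linear_combination h)
  have hkm1' : k - 1 ≠ 0 := fun h => hkm1 (by linear_combination h)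
  have hik : k * k⁻¹ = 1 := mul_inv_cancel₀ hk0
  have hik1 : (k+1) * (k+1)⁻¹ = 1 := mul_inv_cancel₀ hk1'
  have hpm : (k-1)*(k+1) ≠ 0 := mul_ne_zero hkm1' hk1'
  have hp2 : k*(k+2) ≠ 0 := mul_ne_zero hk0 hk2'
  have d12 : k ≠ -1 - k := fun h => h2k (by linear_combination h)
  have d13 : k ≠ k⁻¹ := fun h => hpm (by linear_combination k*h + hik)
  have d14 : k ≠ -1 - k⁻¹ := fun h => hq (by linear_combination k*h - hik)
  have d15 : k ≠ -(k+1)⁻¹ := fun h => hq (by linear_combination (k+1)*h - hik1)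
  have d16 : k ≠ (k+1)⁻¹ - 1 := fun h => hp2 (by linear_combination (k+1)*h + hik1)
  have d23 : (-1 - k : ZMod p) ≠ k⁻¹ := fun h => hq (by linear_combination -k*h - hik)
  have d24 : (-1 - k : ZMod p) ≠ -1 - k⁻¹ := fun h => hpm (by linear_combination -k*h + hik)
  have d25 : (-1 - k : ZMod p) ≠ -(k+1)⁻¹ := fun h => hp2 (by linear_combination -(k+1)*h + hik1)
  have d26 : (-1 - k : ZMod p) ≠ (k+1)⁻¹ - 1 := fun h => hq (by linear_combination -(k+1)*h - hik1)
  have d34 : (k⁻¹ : ZMod p) ≠ -1 - k⁻¹ := fun h => hk2' (by linear_combination k*h - 2*hik)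
  have d35 : (k⁻¹ : ZMod p) ≠ -(k+1)⁻¹ := fun h => h2k (by linear_combination k*(k+1)*h - (k+1)*hik - k*hik1)
  have d36 : (k⁻¹ : ZMod p) ≠ (k+1)⁻¹ - 1 := fun h => hq (by linear_combination k*(k+1)*h - (k+1)*hik + k*hik1)
  have d45 : (-1 - k⁻¹ : ZMod p) ≠ -(k+1)⁻¹ := fun h => hq (by linear_combination -k*(k+1)*h - (k+1)*hik + k*hik1)
  have d46 : (-1 - k⁻¹ : ZMod p) ≠ (k+1)⁻¹ - 1 := fun h => h2k (by linear_combination -k*(k+1)*h - (k+1)*hik - k*hik1)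
  have d56 : (-(k+1)⁻¹ : ZMod p) ≠ (k+1)⁻¹ - 1 := fun h => hkm1' (by linear_combination (k+1)*h + 2*hik1)
  rw [Omega]
  rw [Finset.card_insert_of_notMem (by
      simp only [Finset.mem_insert, Finset.mem_singleton]; push_neg
      exact ⟨d12, d13, d14, d15, d16⟩),
    Finset.card_insert_of_notMem (by
      simp only [Finset.mem_insert, Finset.mem_singleton]; push_neg
      exact ⟨d23, d24, d25, d26⟩),
    Finset.card_insert_of_notMem (by
      simp only [Finset.mem_insert, Finset.mem_singleton]; push_neg
      exact ⟨d34, d35, d36⟩),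
    Finset.card_insert_of_notMem (by
      simp only [Finset.mem_insert, Finset.mem_singleton]; push_neg
      exact ⟨d45, d46⟩),
    Finset.card_insert_of_notMem (by simpa using d56),
    Finset.card_singleton]

lemma exists_root (hp3 : 3 < p) (hp1 : p % 3 = 1) :
    ∃ w : ZMod p, w^2 + w + 1 = 0 := by
  have hcard : Fintype.card (ZMod p)ˣ = p - 1 := ZMod.card_units p
  obtain ⟨g, hg⟩ := IsCyclic.exists_generator (α := (ZMod p)ˣ)
  have hog : orderOf g = p - 1 := by
    rw [orderOf_eq_card_of_forall_mem_zpowers hg, Nat.card_eq_fintype_card, hcard]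
  have hdvd : 3 ∣ p - 1 := by omega
  obtain ⟨m, hm⟩ := hdvd
  have hm0 : 0 < m := by omega
  set z := g ^ m with hz
  have hoz : orderOf z = 3 := by
    rw [hz, orderOf_pow, hog, hm, Nat.gcd_eq_right ⟨3, by ring⟩,
      Nat.mul_div_cancel _ hm0]
  have hz3 : z ^ 3 = 1 := by rw [← hoz]; exact pow_orderOf_eq_one z
  have hz1 : z ≠ 1 := by
    intro h
    rw [h, orderOf_one] at hoz
    omega
  refine ⟨(z : ZMod p), ?_⟩
  have h3 : ((z : ZMod p))^3 = 1 := by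
    have := congrArg (Units.val) hz3
    push_cast at this
    exact this
  have h1 : (z : ZMod p) ≠ 1 := fun h => hz1 (Units.ext h)
  have hfac : ((z:ZMod p) - 1) * ((z:ZMod p)^2 + (z:ZMod p) + 1) = 0 := by
    linear_combination h3
  rcases mul_eq_zero.1 hfac with h|h
  · exact absurd (by linear_combination h) h1
  · exact h

lemma no_root (hp3 : 3 < p) (hp2 : p % 3 = 2) {w : ZMod p} (hw : w^2 + w + 1 = 0) :
    False := by
  have hp : p.Prime := Fact.out
  have hw0 : w ≠ 0 := by intro h; subst h; simpa using hw
  have h3 : (3 : ZMod p) ≠ 0 := by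
    have : ((3:ℕ) : ZMod p) ≠ 0 := by
      rw [Ne, ZMod.natCast_eq_zero_iff]
      intro h
      have := Nat.le_of_dvd (by norm_num) h
      omega
    simpa using this
  have hw1 : w ≠ 1 := by intro h; subst h; exact h3 (by linear_combination hw)
  set u : (ZMod p)ˣ := Units.mk0 w hw0 with hu
  have hu3 : u ^ 3 = 1 := by
    ext
    simp only [hu, Units.val_pow_eq_pow_val, Units.val_mk0, Units.val_one]
    linear_combination (w - 1) * hw
  have hdvd : orderOf u ∣ 3 := orderOf_dvd_of_pow_eq_one hu3
  have hne1 : orderOf u ≠ 1 := by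
    intro h
    have : u = 1 := orderOf_eq_one_iff.1 h
    apply hw1
    have := congrArg (Units.val) this
    simpa [hu] using this
  have ho3 : orderOf u = 3 := by
    rcases (Nat.prime_three).eq_one_or_self_of_dvd _ hdvd with h|h
    · exact absurd h hne1
    · exact h
  have : orderOf u ∣ Fintype.card (ZMod p)ˣ := orderOf_dvd_card
  rw [ho3, ZMod.card_units p] at this
  omega

lemma card_index (hp3 : 3 < p) : (indexSet p).card = p - 2 := by
  have h01 : (0:ZMod p) ∉ ({-1} : Finset (ZMod p)) := by
    simp only [Finset.mem_singleton]
    intro h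
    exact two_ne hp3 (by linear_combination 2*h)
  have : indexSet p = Finset.univ \ {0, -1} := by
    ext x
    simp only [indexSet, Finset.mem_filter, Finset.mem_univ, true_and, Finset.mem_sdiff,
      Finset.mem_insert, Finset.mem_singleton]
    tauto
  rw [this, Finset.card_sdiff_of_subset (Finset.subset_univ _), Finset.card_univ, ZMod.card,
    Finset.card_insert_of_notMem h01, Finset.card_singleton]

lemma one_mem_index (hp3 : 3 < p) : (1 : ZMod p) ∈ indexSet p := by
  simp only [indexSet, Finset.mem_filter, Finset.mem_univ, true_and]
  exact ⟨one_ne_zero, fun h => two_ne hp3 (by linear_combination h)⟩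

lemma root_mem_index (hp3 : 3 < p) {w : ZMod p} (hw : w^2 + w + 1 = 0) :
    w ∈ indexSet p := by
  simp only [indexSet, Finset.mem_filter, Finset.mem_univ, true_and]
  constructor
  · intro h; subst h; exact one_ne_zero (by linear_combination hw)
  · intro h; subst h; exact one_ne_zero (by linear_combination hw)

lemma classify (hp3 : 3 < p) {k : ZMod p} (hk0 : k ≠ 0) (hk1 : k ≠ -1) :
    (Omega p k).card = 6 ∨ Omega p k = Omega p 1 ∨ k^2 + k + 1 = 0 := by
  by_cases hq : k^2 + k + 1 = 0
  · exact Or.inr (Or.inr hq)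
  by_cases hone : k = 1 ∨ k = -2 ∨ k = -(2:ZMod p)⁻¹
  · refine Or.inr (Or.inl ?_)
    have h10 : (1:ZMod p) ≠ 0 := one_ne_zero
    have h11 : (1:ZMod p) ≠ -1 := fun h => two_ne hp3 (by linear_combination h)
    apply omega_eq_of_mem h10 h11
    rw [omega_one hp3]
    simp only [Finset.mem_insert, Finset.mem_singleton]
    exact hone
  push_neg at hone
  obtain ⟨h1, h2, h3⟩ := hone
  refine Or.inl (card_omega_six hk0 hk1 h1 h2 ?_ hq)
  intro h
  apply h3
  have h2i := mul_inv_cancel₀ (two_ne hp3)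
  linear_combination 2⁻¹ * h - k * h2i

theorem stmt_5 (p : ℕ) [Fact p.Prime] (hp3 : 3 < p) :
    (p % 3 = 1 → ((indexSet p).image (Omega p)).card = (p + 5) / 6) ∧
    (p % 3 = 2 → ((indexSet p).image (Omega p)).card = (p + 1) / 6) := by
  have hp : p.Prime := Fact.out
  have hodd : p % 2 = 1 := Nat.odd_iff.1 (hp.odd_of_ne_two (by omega))
  set T := (indexSet p).image (Omega p) with hT
  have hmemI : ∀ k : ZMod p, k ∈ indexSet p ↔ (k ≠ 0 ∧ k ≠ -1) := by
    intro k; simp [indexSet]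
  -- every member of T is an Omega
  have hTmem : ∀ S ∈ T, ∃ k : ZMod p, k ≠ 0 ∧ k ≠ -1 ∧ S = Omega p k := by
    intro S hS
    obtain ⟨k, hk, rfl⟩ := Finset.mem_image.1 hS
    obtain ⟨hk0, hk1⟩ := (hmemI k).1 hk
    exact ⟨k, hk0, hk1, rfl⟩
  -- fibers: if x ∈ S ∈ T then Omega x = S
  have hfiber : ∀ S ∈ T, ∀ x ∈ S, Omega p x = S := by
    intro S hS x hx
    obtain ⟨k, hk0, hk1, rfl⟩ := hTmem S hS
    exact omega_eq_of_mem hk0 hk1 hx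
  have hdisj : ∀ S ∈ T, ∀ S' ∈ T, S ≠ S' → Disjoint S S' := by
    intro S hS S' hS' hne
    rw [Finset.disjoint_left]
    intro x hx hx'
    exact hne ((hfiber S hS x hx).symm.trans (hfiber S' hS' x hx'))
  have hunion : T.biUnion (fun x => x) = indexSet p := by
    ext x
    simp only [Finset.mem_biUnion]
    constructor
    · rintro ⟨S, hS, hx⟩
      obtain ⟨k, hk0, hk1, rfl⟩ := hTmem S hS
      exact omega_subset_index hk0 hk1 hx
    · intro hx
      obtain ⟨hx0, hx1⟩ := (hmemI x).1 hx
      exact ⟨Omega p x, Finset.mem_image_of_mem _ hx, mem_omega_self x⟩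
  have hsum : ∑ S ∈ T, S.card = p - 2 := by
    rw [← Finset.card_biUnion hdisj, hunion, card_index hp3]
  have hO1T : Omega p 1 ∈ T := Finset.mem_image_of_mem _ (one_mem_index hp3)
  constructor
  · -- p ≡ 1 mod 3
    intro hp1
    obtain ⟨w, hw⟩ := exists_root hp3 hp1
    obtain ⟨hwset, hwcard⟩ := card_omega_root hp3 hw
    have hOwT : Omega p w ∈ T := Finset.mem_image_of_mem _ (root_mem_index hp3 hw)
    have hne1w : Omega p 1 ≠ Omega p w := by
      intro h
      have h1 := card_omega_one hp3 (p := p)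
      rw [h, hwcard] at h1
      omega
    have hOwT' : Omega p w ∈ T.erase (Omega p 1) :=
      Finset.mem_erase.2 ⟨fun h => hne1w h.symm, hOwT⟩
    have hrest : ∀ S ∈ (T.erase (Omega p 1)).erase (Omega p w), S.card = 6 := by
      intro S hS
      have hSw := (Finset.mem_erase.1 hS).1
      have hS1 := (Finset.mem_erase.1 (Finset.mem_erase.1 hS).2).1
      have hST := (Finset.mem_erase.1 (Finset.mem_erase.1 hS).2).2
      obtain ⟨k, hk0, hk1, rfl⟩ := hTmem S hST
      rcases classify hp3 hk0 hk1 with h|h|h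
      · exact h
      · exact absurd h hS1
      · -- k is a root, so Omega k = Omega w
        exfalso
        apply hSw
        have hw0 : w ≠ 0 := ((hmemI w).1 (root_mem_index hp3 hw)).1
        have hw1 : w ≠ -1 := ((hmemI w).1 (root_mem_index hp3 hw)).2
        have hfac : (k - w) * (k - w^2) = 0 := by
          linear_combination h + (w - k - 1) * hw
        rcases mul_eq_zero.1 hfac with h'|h'
        · have : k = w := by linear_combination h'
          rw [this]
        · have : k = w^2 := by linear_combination h'
          rw [this]
          apply omega_eq_of_mem hw0 hw1
          rw [hwset]
          simp
    have e1 : ∑ S ∈ T, S.card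
        = (Omega p 1).card + ∑ S ∈ T.erase (Omega p 1), S.card :=
      (Finset.add_sum_erase T _ hO1T).symm
    have e2 : ∑ S ∈ T.erase (Omega p 1), S.card
        = (Omega p w).card + ∑ S ∈ (T.erase (Omega p 1)).erase (Omega p w), S.card :=
      (Finset.add_sum_erase _ _ hOwT').symm
    have e3 : ∑ S ∈ (T.erase (Omega p 1)).erase (Omega p w), S.card
        = ((T.erase (Omega p 1)).erase (Omega p w)).card * 6 :=
      Finset.sum_eq_card_nsmul hrest
    have ecard : ((T.erase (Omega p 1)).erase (Omega p w)).card = T.card - 2 := by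
      rw [Finset.card_erase_of_mem hOwT', Finset.card_erase_of_mem hO1T]
      omega
    have hT2 : 2 ≤ T.card := by
      have h1 : ({Omega p 1, Omega p w} : Finset (Finset (ZMod p))) ⊆ T := by
        intro S hS
        simp only [Finset.mem_insert, Finset.mem_singleton] at hS
        rcases hS with rfl|rfl
        · exact hO1T
        · exact hOwT
      have h2 : ({Omega p 1, Omega p w} : Finset (Finset (ZMod p))).card = 2 := by
        rw [Finset.card_insert_of_notMem (by simpa using hne1w), Finset.card_singleton]
      calc 2 = _ := h2.symm
        _ ≤ T.card := Finset.card_le_card h1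
    rw [e1, e2, e3, ecard, card_omega_one hp3, hwcard] at hsum
    omega
  · -- p ≡ 2 mod 3
    intro hp2
    have hrest : ∀ S ∈ T.erase (Omega p 1), S.card = 6 := by
      intro S hS
      have hS1 := (Finset.mem_erase.1 hS).1
      have hST := (Finset.mem_erase.1 hS).2
      obtain ⟨k, hk0, hk1, rfl⟩ := hTmem S hST
      rcases classify hp3 hk0 hk1 with h|h|h
      · exact h
      · exact absurd h hS1
      · exact absurd h (fun h => no_root hp3 hp2 h)
    have e1 : ∑ S ∈ T, S.card
        = (Omega p 1).card + ∑ S ∈ T.erase (Omega p 1), S.card :=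
      (Finset.add_sum_erase T _ hO1T).symm
    have e3 : ∑ S ∈ T.erase (Omega p 1), S.card = (T.erase (Omega p 1)).card * 6 :=
      Finset.sum_eq_card_nsmul hrest
    have ecard : (T.erase (Omega p 1)).card = T.card - 1 :=
      Finset.card_erase_of_mem hO1T
    have hT1 : 1 ≤ T.card := Finset.card_pos.2 ⟨_, hO1T⟩
    rw [e1, e3, ecard, card_omega_one hp3] at hsum
    omega
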